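/- arXiv:2603.19422 — 6 statements merged into one kernel-verified Lean document; each statement's English description precedes it below -/
import Mathlib

section
/- Let (μ_j)_{j≥1} be a sequence of nonnegative reals with μ_j ≤ j^{-2α} for all j ≥ 1, where α ≥ 1. Then for every λ ∈ (0,1], the effective dimension r(λ) = ∑_{j=1}^∞ μ_j/(μ_j + λ) satisfies r(λ) ≤ (2α/(2α-1)) · λ^{-1/(2α)}. -/
/-!
Each term satisfies `μ_j/(μ_j+λ) ≤ min(1, j^{-2α}/λ)`, and the right-hand side is the value at `j`
of an antitone profile equal to `1` up to the crossover point `c = λ^{-1/(2α)}` and to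
`c^{2α} x^{-2α}` beyond it. The integral test bounds the series by the integral of this profile
over `(0, ∞)`, which is `c + c/(2α-1) = (2α/(2α-1)) c`.
-/

open Real Set MeasureTheory

noncomputable def plateauDecay (c p x : ℝ) : ℝ :=
  if x ≤ c then 1 else c ^ p * x ^ (-p)

section plateauDecay

variable {c p : ℝ}

lemma plateauDecay_of_le {x : ℝ} (h : x ≤ c) : plateauDecay c p x = 1 := if_pos h

lemma plateauDecay_of_lt {x : ℝ} (h : c < x) : plateauDecay c p x = c ^ p * x ^ (-p) :=
  if_neg h.not_ge

lemma plateauDecay_nonneg (hc : 0 ≤ c) (x : ℝ) : 0 ≤ plateauDecay c p x := by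
  rcases le_or_gt x c with hxc | hcx
  · rw [plateauDecay_of_le hxc]
    exact zero_le_one
  · rw [plateauDecay_of_lt hcx]
    exact mul_nonneg (rpow_nonneg hc p) (rpow_nonneg (hc.trans hcx.le) _)

lemma plateauDecay_le_one (hc : 0 < c) (hp : 0 ≤ p) (x : ℝ) : plateauDecay c p x ≤ 1 := by
  rcases le_or_gt x c with hxc | hcx
  · rw [plateauDecay_of_le hxc]
  · calc plateauDecay c p x = c ^ p * x ^ (-p) := plateauDecay_of_lt hcx
      _ ≤ c ^ p * c ^ (-p) := mul_le_mul_of_nonneg_left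
          (rpow_le_rpow_of_nonpos hc hcx.le (neg_nonpos.mpr hp)) (rpow_nonneg hc.le p)
      _ = 1 := by rw [rpow_neg hc.le, mul_inv_cancel₀ (rpow_pos_of_pos hc p).ne']

lemma plateauDecay_antitone (hc : 0 < c) (hp : 0 ≤ p) : Antitone (plateauDecay c p) := by
  intro x y hxy
  rcases le_or_gt x c with hxc | hcx
  · exact plateauDecay_of_le hxc ▸ plateauDecay_le_one hc hp y
  · rw [plateauDecay_of_lt hcx, plateauDecay_of_lt (hcx.trans_le hxy)]
    exact mul_le_mul_of_nonneg_left
      (rpow_le_rpow_of_nonpos (hc.trans hcx) hxy (neg_nonpos.mpr hp)) (rpow_nonneg hc.le p)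

lemma integrableOn_plateauDecay_Ioi (hc : 0 < c) (hp : 1 < p) :
    IntegrableOn (plateauDecay c p) (Ioi 0) := by
  rw [← Ioc_union_Ioi_eq_Ioi hc.le]
  refine IntegrableOn.union ?_ ?_
  · exact (integrableOn_const measure_Ioc_lt_top.ne).congr_fun
      (fun x hx => (plateauDecay_of_le hx.2).symm) measurableSet_Ioc
  · exact IntegrableOn.congr_fun
      ((integrableOn_Ioi_rpow_of_lt (neg_lt_neg hp) hc).const_mul (c ^ p))
      (fun x hx => (plateauDecay_of_lt hx).symm) measurableSet_Ioi

lemma integral_plateauDecay_Ioi (hc : 0 < c) (hp : 1 < p) :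
    ∫ x in Ioi 0, plateauDecay c p x = p / (p - 1) * c := by
  have hint := integrableOn_plateauDecay_Ioi hc hp
  have hp1 : p - 1 ≠ 0 := by linarith
  have hp1' : -p + 1 ≠ 0 := by linarith
  have hplateau : ∫ x in Ioc 0 c, plateauDecay c p x = c := by
    rw [setIntegral_congr_fun measurableSet_Ioc fun x hx => plateauDecay_of_le hx.2]
    simp [hc.le]
  have htail : ∫ x in Ioi c, plateauDecay c p x = c / (p - 1) := by
    rw [setIntegral_congr_fun measurableSet_Ioi fun x hx => plateauDecay_of_lt hx,
      integral_const_mul, integral_Ioi_rpow_of_lt (neg_lt_neg hp) hc,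
      rpow_add hc, rpow_neg hc.le, rpow_one]
    field_simp
    ring
  rw [← Ioc_union_Ioi_eq_Ioi hc.le, setIntegral_union Ioc_disjoint_Ioi_same measurableSet_Ioi
    (hint.mono_set Ioc_subset_Ioi_self) (hint.mono_set (Ioi_subset_Ioi hc.le)), hplateau, htail]
  field_simp
  ring

end plateauDecay

lemma div_add_le_plateauDecay {m l p x : ℝ} (hm : 0 ≤ m) (hl : 0 < l) (hp : p ≠ 0)
    (hmx : m ≤ x ^ (-p)) : m / (m + l) ≤ plateauDecay (l ^ (-(1 / p))) p x := by
  rcases le_or_gt x (l ^ (-(1 / p))) with hxc | hcx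
  · rw [plateauDecay_of_le hxc]
    exact div_le_one_of_le₀ (by linarith) (by linarith)
  · have hcp : (l ^ (-(1 / p))) ^ p = l⁻¹ := by
      rw [← rpow_mul hl.le, neg_mul, one_div_mul_cancel hp, rpow_neg_one]
    calc m / (m + l) ≤ m / l := div_le_div_of_nonneg_left hm hl (by linarith)
      _ = l⁻¹ * m := div_eq_inv_mul m l
      _ ≤ l⁻¹ * x ^ (-p) := mul_le_mul_of_nonneg_left hmx (inv_nonneg.mpr hl.le)
      _ = plateauDecay (l ^ (-(1 / p))) p x := by rw [plateauDecay_of_lt hcx, hcp]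

theorem stmt_2_general (α : ℝ) (hα : 1 ≤ α) (μ : ℕ → ℝ)
    (hnn : ∀ j : ℕ, 1 ≤ j → 0 ≤ μ j)
    (hdecay : ∀ j : ℕ, 1 ≤ j → μ j ≤ (j : ℝ) ^ (-(2 * α)))
    (lam : ℝ) (hl : 0 < lam) :
    ∑' j : ℕ, μ (j + 1) / (μ (j + 1) + lam) ≤
      (2 * α / (2 * α - 1)) * lam ^ (-(1 / (2 * α))) := by
  set g := plateauDecay (lam ^ (-(1 / (2 * α)))) (2 * α)
  have hp : 1 < 2 * α := by linarith
  have hc : 0 < lam ^ (-(1 / (2 * α))) := rpow_pos_of_pos hl _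
  have hanti : AntitoneOn g (Ici 0) := (plateauDecay_antitone hc (by linarith)).antitoneOn _
  have hint : IntegrableOn g (Ioi 0) := integrableOn_plateauDecay_Ioi hc hp
  have hnonneg : ∀ t ∈ Ioi (0 : ℝ), 0 ≤ g t := fun t _ => plateauDecay_nonneg hc.le t
  have hterm (j : ℕ) : μ (j + 1) / (μ (j + 1) + lam) ≤ g (j + 1 : ℕ) :=
    div_add_le_plateauDecay (hnn _ j.succ_pos) hl (by positivity) (hdecay _ j.succ_pos)
  have hterm_nonneg (j : ℕ) : 0 ≤ μ (j + 1) / (μ (j + 1) + lam) := by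
    have := hnn (j + 1) j.succ_pos
    positivity
  have hsummable : Summable fun j : ℕ => g (j + 1 : ℕ) :=
    (summable_nat_add_iff 1).mpr (hanti.summable_of_integrableOn_Ioi_zero hint hnonneg)
  calc ∑' j : ℕ, μ (j + 1) / (μ (j + 1) + lam)
      ≤ ∑' j : ℕ, g (j + 1 : ℕ) :=
        (hsummable.of_nonneg_of_le hterm_nonneg hterm).tsum_le_tsum hterm hsummable
    _ ≤ ∫ x in Ioi 0, g x := hanti.tsum_add_one_le_integral hint hnonneg
    _ = 2 * α / (2 * α - 1) * lam ^ (-(1 / (2 * α))) := integral_plateauDecay_Ioi hc hp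

/-- Effective dimension bound under polynomial eigendecay `μ_j ≤ j^{-2α}`, `α ≥ 1`:
for `λ ∈ (0,1]`, `∑_{j≥1} μ_j/(μ_j+λ) ≤ (2α/(2α-1)) λ^{-1/(2α)}`. -/
theorem stmt_2 (α : ℝ) (hα : 1 ≤ α) (μ : ℕ → ℝ)
    (hnn : ∀ j : ℕ, 1 ≤ j → 0 ≤ μ j)
    (hdecay : ∀ j : ℕ, 1 ≤ j → μ j ≤ (j : ℝ) ^ (-(2 * α)))
    (lam : ℝ) (hl : 0 < lam) (hl1 : lam ≤ 1) :
    ∑' j : ℕ, μ (j + 1) / (μ (j + 1) + lam) ≤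
      (2 * α / (2 * α - 1)) * lam ^ (-(1 / (2 * α))) :=
  stmt_2_general α hα μ hnn hdecay lam hl
end

section
/- Let A ≥ 1, α ≥ 1, and suppose μ_j ≤ A j^{-2α} for all j ≥ 1. Then for λ ∈ (0, A], r(λ) = ∑_{j=1}^∞ μ_j/(μ_j + λ) ≤ (2α A^{1/(2α)}/(2α - 1)) λ^{-1/(2α)}. -/
open Set MeasureTheory Real

/-!
Each term is at most `min 1 (C j^(-p))` with `C = A/λ` and `p = 2α`. For `T = C^(1/p)` this
equals `C * max j T ^ (-p)`, an antitone function of `j`, so by the integral test the sum is at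
most `∫₀^∞ C max(x, T)^(-p) dx = T + T/(p-1) = p/(p-1) · A^(1/p) λ^(-1/p)`.
-/

section MaxRpow

variable {T p : ℝ}

lemma min_one_mul_rpow_neg (hT : 0 < T) (hp : 0 ≤ p) {x : ℝ} (hx : 0 < x) :
    min 1 (T ^ p * x ^ (-p)) = T ^ p * max x T ^ (-p) := by
  have hTT : T ^ p * T ^ (-p) = 1 := by
    rw [rpow_neg hT.le, mul_inv_cancel₀ (rpow_pos_of_pos hT p).ne']
  rcases le_total x T with h | h
  · rw [max_eq_right h, hTT, min_eq_left]
    rw [← hTT]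
    exact mul_le_mul_of_nonneg_left (rpow_le_rpow_of_nonpos hx h (neg_nonpos.2 hp)) (by positivity)
  · rw [max_eq_left h, min_eq_right]
    rw [← hTT]
    exact mul_le_mul_of_nonneg_left (rpow_le_rpow_of_nonpos hT h (neg_nonpos.2 hp)) (by positivity)

lemma antitone_max_rpow_neg (hT : 0 < T) (hp : 0 ≤ p) :
    Antitone fun x : ℝ ↦ max x T ^ (-p) := fun _ _ hxy ↦
  rpow_le_rpow_of_nonpos (hT.trans_le (le_max_right _ _)) (max_le_max_right T hxy)
    (neg_nonpos.2 hp)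

lemma integrableOn_max_rpow_neg (hT : 0 < T) (hp : 1 < p) :
    IntegrableOn (fun x : ℝ ↦ max x T ^ (-p)) (Ioi 0) := by
  rw [← Ioc_union_Ioi_eq_Ioi hT.le]
  refine IntegrableOn.union ?_ ?_
  · exact (integrableOn_const (C := T ^ (-p)) measure_Ioc_lt_top.ne).congr_fun
      (fun x hx ↦ by simp only [max_eq_right hx.2]) measurableSet_Ioc
  · exact (integrableOn_Ioi_rpow_of_lt (a := -p) (by linarith) hT).congr_fun
      (fun x hx ↦ by simp only [max_eq_left (le_of_lt (mem_Ioi.1 hx))]) measurableSet_Ioi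

lemma integral_max_rpow_neg (hT : 0 < T) (hp : 1 < p) :
    ∫ x in Ioi 0, max x T ^ (-p) = p / (p - 1) * T ^ (1 - p) := by
  have hint := integrableOn_max_rpow_neg hT hp
  rw [← Ioc_union_Ioi_eq_Ioi hT.le] at hint ⊢
  rw [setIntegral_union Ioc_disjoint_Ioi_same measurableSet_Ioi
    (hint.mono_set subset_union_left) (hint.mono_set subset_union_right),
    setIntegral_congr_fun measurableSet_Ioc (g := fun _ ↦ T ^ (-p))
      (fun x hx ↦ by simp only [max_eq_right hx.2]),
    setIntegral_congr_fun measurableSet_Ioi (g := fun x ↦ x ^ (-p))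
      (fun x hx ↦ by simp only [max_eq_left (le_of_lt (mem_Ioi.1 hx))]),
    setIntegral_const, integral_Ioi_rpow_of_lt (by linarith) hT]
  simp only [Real.volume_real_Ioc, sub_zero, max_eq_left hT.le, smul_eq_mul]
  have hmul : T * T ^ (-p) = T ^ (1 - p) := by
    rw [sub_eq_add_neg, rpow_add hT, rpow_one]
  rw [hmul, show -p + 1 = 1 - p by ring]
  have : p - 1 ≠ 0 := by linarith
  have : 1 - p ≠ 0 := by linarith
  field_simp
  ring

end MaxRpow

theorem tsum_le_of_le_min_one_mul_rpow_neg {p C : ℝ} (hp : 1 < p) (hC : 0 < C) {a : ℕ → ℝ}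
    (ha : ∀ n, 0 ≤ a n) (ha_le : ∀ n, a n ≤ min 1 (C * ((n : ℝ) + 1) ^ (-p))) :
    ∑' n, a n ≤ p / (p - 1) * C ^ (1 / p) := by
  set T := C ^ (1 / p)
  have hT : 0 < T := rpow_pos_of_pos hC _
  have hTp : T ^ p = C := by
    simp only [T, one_div]
    exact rpow_inv_rpow hC.le (by linarith)
  set g : ℝ → ℝ := fun x ↦ C * max x T ^ (-p)
  have hg_anti : Antitone g := fun x y hxy ↦
    mul_le_mul_of_nonneg_left (antitone_max_rpow_neg hT (by linarith) hxy) hC.le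
  have hg_int : IntegrableOn g (Ioi 0) := (integrableOn_max_rpow_neg hT hp).const_mul C
  have hg_nonneg : ∀ x, 0 ≤ g x := fun x ↦
    mul_nonneg hC.le (rpow_nonneg (hT.le.trans (le_max_right _ _)) _)
  have ha_g : ∀ n : ℕ, a n ≤ g ((n + 1 : ℕ) : ℝ) := fun n ↦ by
    have hmin := min_one_mul_rpow_neg (p := p) hT (by linarith) (x := (n : ℝ) + 1) (by positivity)
    rw [hTp] at hmin
    refine (ha_le n).trans_eq ?_
    rw [hmin]
    push_cast
    rfl
  have hg_summable : Summable fun n : ℕ ↦ g ((n + 1 : ℕ) : ℝ) :=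
    (summable_nat_add_iff 1).2 <| (hg_anti.antitoneOn _).summable_of_integrableOn_Ioi_zero
      hg_int fun x _ ↦ hg_nonneg x
  calc ∑' n, a n ≤ ∑' n : ℕ, g ((n + 1 : ℕ) : ℝ) :=
        (hg_summable.of_nonneg_of_le ha ha_g).tsum_le_tsum ha_g hg_summable
    _ ≤ ∫ x in Ioi 0, g x :=
        (hg_anti.antitoneOn _).tsum_add_one_le_integral hg_int fun x _ ↦ hg_nonneg x
    _ = p / (p - 1) * T := by
        rw [integral_const_mul, integral_max_rpow_neg hT hp, ← hTp, mul_left_comm,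
          ← rpow_add hT, add_sub_cancel, rpow_one]

lemma div_add_le_min_one_div {m l : ℝ} (hm : 0 ≤ m) (hl : 0 < l) :
    m / (m + l) ≤ min 1 (m / l) :=
  le_min ((div_le_one (by linarith)).2 (by linarith))
    (div_le_div_of_nonneg_left hm hl (by linarith))

theorem stmt_3_general (A α : ℝ) (hα : 1 ≤ α) (μ : ℕ → ℝ)
    (hnn : ∀ j : ℕ, 1 ≤ j → 0 ≤ μ j)
    (hdecay : ∀ j : ℕ, 1 ≤ j → μ j ≤ A * (j : ℝ) ^ (-(2 * α)))
    (lam : ℝ) (hl : 0 < lam) (hlA : lam ≤ A) :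
    ∑' j : ℕ, μ (j + 1) / (μ (j + 1) + lam) ≤
      (2 * α * A ^ (1 / (2 * α)) / (2 * α - 1)) * lam ^ (-(1 / (2 * α))) := by
  have hA : 0 < A := hl.trans_le hlA
  have hμ (j : ℕ) : 0 ≤ μ (j + 1) := hnn _ j.succ_pos
  have hterm (j : ℕ) :
      μ (j + 1) / (μ (j + 1) + lam) ≤ min 1 (A / lam * ((j : ℝ) + 1) ^ (-(2 * α))) := by
    refine (div_add_le_min_one_div (hμ j) hl).trans (min_le_min_left _ ?_)
    rw [div_mul_eq_mul_div]
    gcongr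
    exact_mod_cast hdecay _ j.succ_pos
  calc _ ≤ 2 * α / (2 * α - 1) * (A / lam) ^ (1 / (2 * α)) :=
        tsum_le_of_le_min_one_mul_rpow_neg (by linarith) (div_pos hA hl)
          (fun j ↦ div_nonneg (hμ j) (by linarith [hμ j])) hterm
    _ = _ := by
        rw [div_rpow hA.le hl.le, rpow_neg hl.le]
        ring

/-- Effective dimension bound under eigendecay `μ_j ≤ A j^{-2α}`, `A ≥ 1`, `α ≥ 1`:
for `λ ∈ (0,A]`, `∑_{j≥1} μ_j/(μ_j+λ) ≤ (2α A^{1/(2α)}/(2α-1)) λ^{-1/(2α)}`. -/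
theorem stmt_3 (A α : ℝ) (hA : 1 ≤ A) (hα : 1 ≤ α) (μ : ℕ → ℝ)
    (hnn : ∀ j : ℕ, 1 ≤ j → 0 ≤ μ j)
    (hdecay : ∀ j : ℕ, 1 ≤ j → μ j ≤ A * (j : ℝ) ^ (-(2 * α)))
    (lam : ℝ) (hl : 0 < lam) (hlA : lam ≤ A) :
    ∑' j : ℕ, μ (j + 1) / (μ (j + 1) + lam) ≤
      (2 * α * A ^ (1 / (2 * α)) / (2 * α - 1)) * lam ^ (-(1 / (2 * α))) :=
  stmt_3_general A α hα μ hnn hdecay lam hl hlA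
end

section
/- Let a : ℝ → ℝ satisfy k ≤ a''(z) for all |z| ≤ 2C, with k > 0, and suppose a'' is L-Lipschitz on [-2C, 2C]. Let q_i lie between f*(x_i) and f̃(x_i) where |f*(x_i)| ≤ C and |f̃(x_i) - f*(x_i)| ≤ η ≤ C with Lη/k < 1. Then for any vector z ∈ ℝⁿ, the weighted norms ‖z‖²_{D̄} := ∑_i a''(f*(x_i)) z_i² and ‖z‖²_{D̃} := ∑_i a''(q_i) z_i² satisfy |‖z‖²_{D̄} - ‖z‖²_{D̃}| ≤ (Lη/k) ‖z‖²_{D̃}, and hence ‖z‖_{D̄} ≤ √2 ‖z‖_{D̃} when Lη/k ≤ 1. -/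
/-! The Lipschitz bound gives `|a''(f*(x_i)) - a''(q_i)| ≤ L η`, and strong convexity turns this
additive error into the relative one `L η ≤ (L η / k) a''(q_i)`, since both points stay in
`[-2C, 2C]`. Summing against `z_i²` compares the two quadratic forms, and `L η / k ≤ 1` then
gives `‖z‖²_{D̄} ≤ 2 ‖z‖²_{D̃}`. -/

open Finset

lemma abs_sub_le_div_mul_of_lipschitzOn_of_le {g : ℝ → ℝ} {C k L η x y : ℝ}
    (hk : 0 < k) (hL : 0 ≤ L)
    (hconv : ∀ z : ℝ, |z| ≤ 2 * C → k ≤ g z)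
    (hlip : ∀ z w : ℝ, |z| ≤ 2 * C → |w| ≤ 2 * C → |g z - g w| ≤ L * |z - w|)
    (hx : |x| ≤ C) (hxy : |y - x| ≤ η) (hη : η ≤ C) :
    |g x - g y| ≤ L * η / k * g y := by
  have hη0 : 0 ≤ η := (abs_nonneg _).trans hxy
  have hx2 : |x| ≤ 2 * C := by linarith [abs_nonneg x]
  have hy2 : |y| ≤ 2 * C := by linarith [abs_sub_abs_le_abs_sub y x]
  calc |g x - g y| ≤ L * |x - y| := hlip x y hx2 hy2
    _ ≤ L * η := by rw [abs_sub_comm]; gcongr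
    _ = L * η / k * k := by field_simp
    _ ≤ L * η / k * g y := by gcongr; exact hconv y hy2

lemma abs_sum_mul_sq_sub_le {ι : Type*} [Fintype ι] {u v z : ι → ℝ} {ε : ℝ}
    (h : ∀ i, |u i - v i| ≤ ε * v i) :
    |(∑ i, u i * z i ^ 2) - ∑ i, v i * z i ^ 2| ≤ ε * ∑ i, v i * z i ^ 2 := by
  rw [← sum_sub_distrib, mul_sum]
  calc |∑ i, (u i * z i ^ 2 - v i * z i ^ 2)|
      ≤ ∑ i, |u i * z i ^ 2 - v i * z i ^ 2| := abs_sum_le_sum_abs _ _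
    _ ≤ ∑ i, ε * (v i * z i ^ 2) := by
        gcongr with i
        rw [← sub_mul, abs_mul, abs_of_nonneg (sq_nonneg (z i)), ← mul_assoc]
        exact mul_le_mul_of_nonneg_right (h i) (sq_nonneg _)

lemma sqrt_le_sqrt_two_mul_sqrt_of_abs_sub_le {A B ε : ℝ} (hB : 0 ≤ B) (hε : ε ≤ 1)
    (h : |A - B| ≤ ε * B) : √A ≤ √2 * √B := by
  have hA : A ≤ 2 * B := by nlinarith [(abs_le.1 h).2]
  rw [← Real.sqrt_mul zero_le_two]
  exact Real.sqrt_le_sqrt hA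

theorem stmt_9_general (n : ℕ) (a : ℝ → ℝ) (C k L η : ℝ) (hk : 0 < k)
    (hL : 0 ≤ L)
    (fstar ftil q : Fin n → ℝ)
    (hconv : ∀ z : ℝ, |z| ≤ 2 * C → k ≤ deriv (deriv a) z)
    (hlip : ∀ z w : ℝ, |z| ≤ 2 * C → |w| ≤ 2 * C →
      |deriv (deriv a) z - deriv (deriv a) w| ≤ L * |z - w|)
    (hfstar : ∀ i, |fstar i| ≤ C) (hftil : ∀ i, |ftil i - fstar i| ≤ η)
    (hη : η ≤ C) (hq : ∀ i, q i ∈ Set.uIcc (fstar i) (ftil i))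
    (hLη : L * η / k < 1) (z : Fin n → ℝ) :
    |(∑ i, deriv (deriv a) (fstar i) * z i ^ 2) - ∑ i, deriv (deriv a) (q i) * z i ^ 2|
        ≤ L * η / k * ∑ i, deriv (deriv a) (q i) * z i ^ 2 ∧
      Real.sqrt (∑ i, deriv (deriv a) (fstar i) * z i ^ 2)
        ≤ Real.sqrt 2 * Real.sqrt (∑ i, deriv (deriv a) (q i) * z i ^ 2) := by
  have hqf (i : Fin n) : |q i - fstar i| ≤ η :=
    (Set.abs_sub_left_of_mem_uIcc (hq i)).trans (hftil i)
  have hqC (i : Fin n) : |q i| ≤ 2 * C := by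
    linarith [abs_sub_abs_le_abs_sub (q i) (fstar i), hfstar i, hqf i]
  have hdiff : |(∑ i, deriv (deriv a) (fstar i) * z i ^ 2) - ∑ i, deriv (deriv a) (q i) * z i ^ 2|
      ≤ L * η / k * ∑ i, deriv (deriv a) (q i) * z i ^ 2 :=
    abs_sum_mul_sq_sub_le fun i =>
      abs_sub_le_div_mul_of_lipschitzOn_of_le hk hL hconv hlip (hfstar i) (hqf i) hη
  have hpos : 0 ≤ ∑ i, deriv (deriv a) (q i) * z i ^ 2 :=
    sum_nonneg fun i _ => mul_nonneg (hk.le.trans (hconv _ (hqC i))) (sq_nonneg _)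
  exact ⟨hdiff, sqrt_le_sqrt_two_mul_sqrt_of_abs_sub_le hpos hLη.le hdiff⟩

/-- Comparison of the weighted norms `‖z‖_{D̄}` (weights `a''(f*(x_i))`) and
`‖z‖_{D̃}` (weights `a''(q_i)`) under local strong convexity and Lipschitz
continuity of `a''` on `[-2C, 2C]`. -/
theorem stmt_9 (n : ℕ) (a : ℝ → ℝ) (C k L η : ℝ) (hk : 0 < k) (hC : 0 ≤ C)
    (hL : 0 ≤ L) (hη0 : 0 ≤ η)
    (fstar ftil q : Fin n → ℝ)
    (hconv : ∀ z : ℝ, |z| ≤ 2 * C → k ≤ deriv (deriv a) z)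
    (hlip : ∀ z w : ℝ, |z| ≤ 2 * C → |w| ≤ 2 * C →
      |deriv (deriv a) z - deriv (deriv a) w| ≤ L * |z - w|)
    (hfstar : ∀ i, |fstar i| ≤ C) (hftil : ∀ i, |ftil i - fstar i| ≤ η)
    (hη : η ≤ C) (hq : ∀ i, q i ∈ Set.uIcc (fstar i) (ftil i))
    (hLη : L * η / k < 1) (z : Fin n → ℝ) :
    |(∑ i, deriv (deriv a) (fstar i) * z i ^ 2) - ∑ i, deriv (deriv a) (q i) * z i ^ 2|
        ≤ L * η / k * ∑ i, deriv (deriv a) (q i) * z i ^ 2 ∧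
      Real.sqrt (∑ i, deriv (deriv a) (fstar i) * z i ^ 2)
        ≤ Real.sqrt 2 * Real.sqrt (∑ i, deriv (deriv a) (q i) * z i ^ 2) :=
  stmt_9_general n a C k L η hk hL fstar ftil q hconv hlip hfstar hftil hη hq hLη z
end

section
/- Let Σ and Σ₀ be positive self-adjoint trace-class operators on a Hilbert space, n ≥ 1, μ² > 0, k > 0, and let n_eff = sup{ t ≤ n : t Σ₀ ⪯ n Σ + (μ²/k) I }. Set r = n_eff / n and let λ ≥ μ²/n. Then (kΣ + λ I)^{-1} ⪯ 2 r^{-1} (k Σ₀ + r^{-1} λ I)^{-1}. -/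
/-!
Set `A = kΣ + λI` and `B = kΣ₀ + r⁻¹λI`. The domination hypothesis gives `rkΣ₀ ⪯ kΣ + (μ²/n)I ⪯ A`,
hence `(r/2)B ⪯ A`, and inversion is antitone for the Loewner order. The last step only uses the
quadratic forms: for `C ⪰ 0` and `Cc = u`, the map `a ↦ 2⟪a, u⟫ - ⟪a, Ca⟫` is maximised at `a = c`,
and at `a = A⁻¹u` its value is at least `⟪u, A⁻¹u⟫`.
-/

open ContinuousLinearMap
open scoped InnerProductSpace

namespace ContinuousLinearMap.IsPositive

variable {E : Type*} [NormedAddCommGroup E] [InnerProductSpace ℝ E] {C A : E →L[ℝ] E} {u c : E}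

theorem two_mul_inner_sub_le_inner_of_apply_eq (hC : C.IsPositive) (hc : C c = u) (a : E) :
    2 * ⟪a, u⟫_ℝ - ⟪a, C a⟫_ℝ ≤ ⟪u, c⟫_ℝ := by
  have hsq : 0 ≤ ⟪c - a, C (c - a)⟫_ℝ := hC.inner_nonneg_right _
  have hsymm : ⟪c, C a⟫_ℝ = ⟪a, u⟫_ℝ := by
    rw [← hC.inner_left_eq_inner_right, real_inner_comm, hc]
  rw [map_sub, inner_sub_left, inner_sub_right, inner_sub_right, hsymm, hc] at hsq
  linarith [real_inner_comm u c]

theorem inner_le_inner_of_forall_inner_le {a : E} (hC : C.IsPositive)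
    (hCA : ∀ x, ⟪x, C x⟫_ℝ ≤ ⟪x, A x⟫_ℝ) (ha : A a = u) (hc : C c = u) :
    ⟪u, a⟫_ℝ ≤ ⟪u, c⟫_ℝ := by
  have hmax := hC.two_mul_inner_sub_le_inner_of_apply_eq hc a
  have hdom := hCA a
  rw [ha] at hdom
  rw [real_inner_comm]
  linarith

end ContinuousLinearMap.IsPositive

theorem isPositive_smul_add_smul_one {E : Type*} [NormedAddCommGroup E] [InnerProductSpace ℝ E]
    {T : E →L[ℝ] E} (hT : ∀ x y, ⟪T x, y⟫_ℝ = ⟪x, T y⟫_ℝ) (hT0 : ∀ x, 0 ≤ ⟪x, T x⟫_ℝ)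
    {α β : ℝ} (hα : 0 ≤ α) (hβ : 0 ≤ β) : (α • T + β • (1 : E →L[ℝ] E)).IsPositive := by
  have hTpos : T.IsPositive :=
    (T.isPositive_iff).2 ⟨hT, fun x => (hT0 x).trans_eq (real_inner_comm _ _)⟩
  exact (hTpos.smul_of_nonneg hα).add (isPositive_one.smul_of_nonneg hβ)

theorem half_mul_resolvent_form_le {n mu2 k lam r s s0 N : ℝ} (hn : 0 < n) (hk : 0 < k)
    (hr : 0 < r) (hs : 0 ≤ s) (hN : 0 ≤ N) (hdom : r * n * s0 ≤ n * s + mu2 / k * N)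
    (hlam : mu2 / n ≤ lam) :
    r / 2 * (k * s0 + r⁻¹ * lam * N) ≤ k * s + lam * N := by
  have hscaled : r * k * s0 ≤ k * s + mu2 / n * N := by
    have h := mul_le_mul_of_nonneg_left hdom (div_pos hk hn).le
    have hl : k / n * (r * n * s0) = r * k * s0 := by field_simp
    have hr' : k / n * (n * s + mu2 / k * N) = k * s + mu2 / n * N := by field_simp
    linarith
  have hrinv : r / 2 * (r⁻¹ * lam * N) = lam * N / 2 := by field_simp
  linarith [mul_le_mul_of_nonneg_right hlam hN, mul_nonneg hk.le hs]

theorem stmt_11_general {H : Type*} [NormedAddCommGroup H] [InnerProductSpace ℝ H]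
    (Sig Sig0 Ainv Binv : H →L[ℝ] H)
    (hSig0Sa : ∀ u v : H, (inner ℝ (Sig0 u) v : ℝ) = inner ℝ u (Sig0 v))
    (hSigPos : ∀ u : H, 0 ≤ (inner ℝ u (Sig u) : ℝ))
    (hSig0Pos : ∀ u : H, 0 ≤ (inner ℝ u (Sig0 u) : ℝ))
    (n mu2 k lam neff r : ℝ) (hn : 1 ≤ n) (hmu : 0 < mu2) (hk : 0 < k)
    (hneffpos : 0 < neff)
    (hdom : ∀ u : H, neff * (inner ℝ u (Sig0 u) : ℝ)
      ≤ n * (inner ℝ u (Sig u) : ℝ) + mu2 / k * ‖u‖ ^ 2)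
    (hr : r = neff / n) (hlam : mu2 / n ≤ lam)
    (hAinv : ∀ u : H, (k • Sig + lam • (1 : H →L[ℝ] H)) (Ainv u) = u ∧
      Ainv ((k • Sig + lam • (1 : H →L[ℝ] H)) u) = u)
    (hBinv : ∀ u : H, (k • Sig0 + (r⁻¹ * lam) • (1 : H →L[ℝ] H)) (Binv u) = u ∧
      Binv ((k • Sig0 + (r⁻¹ * lam) • (1 : H →L[ℝ] H)) u) = u) :
    ∀ u : H, (inner ℝ u (Ainv u) : ℝ) ≤ 2 * r⁻¹ * (inner ℝ u (Binv u) : ℝ) := by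
  intro u
  have hn0 : 0 < n := one_pos.trans_le hn
  have hr0 : 0 < r := hr ▸ div_pos hneffpos hn0
  have hneff : neff = r * n := by rw [hr]; field_simp
  have hlam0 : 0 ≤ lam := (div_pos hmu hn0).le.trans hlam
  set C := (r / 2) • (k • Sig0 + (r⁻¹ * lam) • (1 : H →L[ℝ] H))
  have hC : C.IsPositive := (isPositive_smul_add_smul_one hSig0Sa hSig0Pos hk.le
    (by positivity)).smul_of_nonneg (by positivity)
  have hCA : ∀ x, ⟪x, C x⟫_ℝ ≤ ⟪x, (k • Sig + lam • (1 : H →L[ℝ] H)) x⟫_ℝ := by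
    intro x
    simp only [C, smul_apply, add_apply, one_apply_eq_self, real_inner_smul_right,
      inner_add_right, real_inner_self_eq_norm_sq]
    exact half_mul_resolvent_form_le hn0 hk hr0 (hSigPos x) (sq_nonneg _) (hneff ▸ hdom x) hlam
  have hc : C ((2 * r⁻¹) • Binv u) = u := by
    rw [map_smul, smul_apply, (hBinv u).1, smul_smul]
    field_simp
    exact one_smul ℝ u
  have key := hC.inner_le_inner_of_forall_inner_le hCA (hAinv u).1 hc
  rwa [real_inner_smul_right] at key

/-- Effective-sample-size comparison of resolvents: if `n_eff Σ₀ ⪯ n Σ + (μ²/k) I`,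
`r = n_eff/n`, and `λ ≥ μ²/n`, then `(kΣ + λI)⁻¹ ⪯ 2 r⁻¹ (kΣ₀ + r⁻¹λ I)⁻¹`
(the inverses are given as two-sided inverse operators `Ainv`, `Binv`). -/
theorem stmt_11 {H : Type*} [NormedAddCommGroup H] [InnerProductSpace ℝ H]
    (Sig Sig0 Ainv Binv : H →L[ℝ] H)
    (hSigSa : ∀ u v : H, (inner ℝ (Sig u) v : ℝ) = inner ℝ u (Sig v))
    (hSig0Sa : ∀ u v : H, (inner ℝ (Sig0 u) v : ℝ) = inner ℝ u (Sig0 v))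
    (hSigPos : ∀ u : H, 0 ≤ (inner ℝ u (Sig u) : ℝ))
    (hSig0Pos : ∀ u : H, 0 ≤ (inner ℝ u (Sig0 u) : ℝ))
    (n mu2 k lam neff r : ℝ) (hn : 1 ≤ n) (hmu : 0 < mu2) (hk : 0 < k)
    (hneffpos : 0 < neff) (hneffle : neff ≤ n)
    (hdom : ∀ u : H, neff * (inner ℝ u (Sig0 u) : ℝ)
      ≤ n * (inner ℝ u (Sig u) : ℝ) + mu2 / k * ‖u‖ ^ 2)
    (hr : r = neff / n) (hlam : mu2 / n ≤ lam)
    (hAinv : ∀ u : H, (k • Sig + lam • (1 : H →L[ℝ] H)) (Ainv u) = u ∧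
      Ainv ((k • Sig + lam • (1 : H →L[ℝ] H)) u) = u)
    (hBinv : ∀ u : H, (k • Sig0 + (r⁻¹ * lam) • (1 : H →L[ℝ] H)) (Binv u) = u ∧
      Binv ((k • Sig0 + (r⁻¹ * lam) • (1 : H →L[ℝ] H)) u) = u) :
    ∀ u : H, (inner ℝ u (Ainv u) : ℝ) ≤ 2 * r⁻¹ * (inner ℝ u (Binv u) : ℝ) :=
  stmt_11_general Sig Sig0 Ainv Binv hSig0Sa hSigPos hSig0Pos n mu2 k lam neff r hn hmu hk hneffpos
    hdom hr hlam hAinv hBinv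
end

section
/- Let D and D̄ be positive diagonal n×n matrices with entries D_ii, D̄_ii satisfying |D_ii - D̄_ii|/D̄_ii ≤ 1/2 for all i, let X : H → ℝⁿ be a bounded operator from a Hilbert space, λ > 0, and set H_op = (1/n)Xᵀ D X + λI and H̄_op = (1/n)Xᵀ D̄ X + λI. Then -(1/2)H̄_op ⪯ H_op - H̄_op ⪯ (1/2)H̄_op, and the operator Δ = H̄_op^{-1/2} H_op H̄_op^{-1/2} - I satisfies ‖Δ‖ ≤ 1/2. -/
/-!
The quadratic form of `H_op - H̄_op` is `u ↦ (1/n) ∑ᵢ (dᵢ - d̄ᵢ) (X u)ᵢ²`, which is bounded termwise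
by half of `(1/n) ∑ᵢ d̄ᵢ (X u)ᵢ² ≤ ⟪u, H̄_op u⟫`. Substituting `u = R x` with `R = H̄_op^{-1/2}` turns
this into `|⟪x, Δ x⟫| ≤ ‖x‖² / 2`, and for the symmetric operator `Δ` the norm equals the
supremum of `|⟪x, Δ x⟫|` over the unit sphere.
-/

open ContinuousLinearMap RCLike

theorem Function.apply_apply_apply_eq_self_of_sq_inverse {α : Type*} {r b : α → α}
    (hl : LeftInverse (r ∘ r) b) (hr : RightInverse (r ∘ r) b) (u : α) : r (b (r u)) = u :=
  hr.injective.of_comp (hl (r u))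

theorem abs_sum_sub_mul_le {ι R : Type*} [Field R] [LinearOrder R] [IsStrictOrderedRing R]
    (s : Finset ι) {d e w : ι → R} {ε : R} (hde : ∀ i ∈ s, |d i - e i| ≤ ε * e i)
    (hw : ∀ i ∈ s, 0 ≤ w i) :
    |∑ i ∈ s, (d i - e i) * w i| ≤ ε * ∑ i ∈ s, e i * w i := by
  calc |∑ i ∈ s, (d i - e i) * w i|
      ≤ ∑ i ∈ s, |d i - e i| * w i := by
        refine (Finset.abs_sum_le_sum_abs _ _).trans_eq (Finset.sum_congr rfl fun i hi => ?_)
        rw [abs_mul, abs_of_nonneg (hw i hi)]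
    _ ≤ ∑ i ∈ s, ε * e i * w i :=
        Finset.sum_le_sum fun i hi => mul_le_mul_of_nonneg_right (hde i hi) (hw i hi)
    _ = ε * ∑ i ∈ s, e i * w i := by simp only [Finset.mul_sum, mul_assoc]

section RCLike

variable {𝕜 E : Type*} [RCLike 𝕜] [NormedAddCommGroup E] [InnerProductSpace 𝕜 E]

theorem ContinuousLinearMap.opNorm_le_of_abs_re_inner_self_le {T : E →L[𝕜] E}
    (hT : (T : E →ₗ[𝕜] E).IsSymmetric) {c : ℝ} (hc : 0 ≤ c)
    (h : ∀ x, |re (inner 𝕜 (T x) x)| ≤ c * ‖x‖ ^ 2) : ‖T‖ ≤ c := by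
  rw [T.norm_eq_iSup_rayleighQuotient hT]
  refine ciSup_le fun x => ?_
  rcases eq_or_ne x 0 with rfl | hx
  · simpa using hc
  rw [rayleighQuotient, reApplyInnerSelf_apply, abs_div, abs_sq,
    div_le_iff₀ (by positivity)]
  exact h x

end RCLike

section Real

variable {H : Type*} [NormedAddCommGroup H] [InnerProductSpace ℝ H]

theorem norm_conj_sub_one_le {A B R : H →L[ℝ] H} (hA : (A : H →ₗ[ℝ] H).IsSymmetric)
    (hR : (R : H →ₗ[ℝ] H).IsSymmetric) (hRBR : ∀ u, R (B (R u)) = u) {c : ℝ} (hc : 0 ≤ c)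
    (h : ∀ u, |inner ℝ u ((A - B) u)| ≤ c * inner ℝ u (B u)) :
    ‖R ∘L A ∘L R - 1‖ ≤ c := by
  have hsymm : ((R ∘L A ∘L R - 1 : H →L[ℝ] H) : H →ₗ[ℝ] H).IsSymmetric := fun x y => by
    simp only [coe_coe, sub_apply, comp_apply, one_apply_eq_self, inner_sub_left,
      inner_sub_right]
    rw [hR.apply_clm, hA.apply_clm, hR.apply_clm]
  have hB (x : H) : inner ℝ (R x) (B (R x)) = ‖x‖ ^ 2 := by
    rw [hR.apply_clm, hRBR, real_inner_self_eq_norm_sq]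
  refine opNorm_le_of_abs_re_inner_self_le hsymm hc fun x => ?_
  have hquad : inner ℝ ((R ∘L A ∘L R - 1) x) x = inner ℝ (R x) ((A - B) (R x)) := by
    rw [sub_apply, inner_sub_left, sub_apply, inner_sub_right, hB, comp_apply, comp_apply,
      hR.apply_clm, real_inner_comm, one_apply_eq_self, real_inner_self_eq_norm_sq]
  rw [re_to_real, hquad, ← hB]
  exact h (R x)

variable [CompleteSpace H] {ι : Type*} [Fintype ι]

noncomputable def regularizedGram (X : H →L[ℝ] EuclideanSpace ℝ ι)
    (D : EuclideanSpace ℝ ι →L[ℝ] EuclideanSpace ℝ ι) (s lam : ℝ) : H →L[ℝ] H :=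
  s • (adjoint X ∘L D ∘L X) + lam • 1

variable {X : H →L[ℝ] EuclideanSpace ℝ ι} {D E : EuclideanSpace ℝ ι →L[ℝ] EuclideanSpace ℝ ι}
  {d e : ι → ℝ} {s lam : ℝ}

theorem inner_regularizedGram_apply (hD : ∀ v i, D v i = d i * v i) (u v : H) :
    inner ℝ u (regularizedGram X D s lam v) =
      s * ∑ i, d i * (X u i * X v i) + lam * inner ℝ u v := by
  simp only [regularizedGram, add_apply, smul_apply, one_apply_eq_self, comp_apply, inner_add_right,
    real_inner_smul_right, adjoint_inner_right, PiLp.inner_apply, RCLike.inner_apply,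
    conj_trivial, hD]
  congr 2
  exact Finset.sum_congr rfl fun i _ => by ring

theorem regularizedGram_isSymmetric (hD : ∀ v i, D v i = d i * v i) :
    (regularizedGram X D s lam : H →ₗ[ℝ] H).IsSymmetric := fun u v => by
  rw [coe_coe, real_inner_comm, inner_regularizedGram_apply hD, inner_regularizedGram_apply hD,
    real_inner_comm]
  simp only [mul_comm (X v _)]

theorem abs_inner_regularizedGram_sub_le (hD : ∀ v i, D v i = d i * v i)
    (hE : ∀ v i, E v i = e i * v i) (hs : 0 ≤ s) (hlam : 0 ≤ lam) {ε : ℝ} (hε : 0 ≤ ε)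
    (hde : ∀ i, |d i - e i| ≤ ε * e i) (u : H) :
    |inner ℝ u ((regularizedGram X D s lam - regularizedGram X E s lam) u)| ≤
      ε * inner ℝ u (regularizedGram X E s lam u) := by
  have hsum := abs_sum_sub_mul_le Finset.univ (fun i _ => hde i)
    (fun i _ => mul_self_nonneg (X u i))
  have hdiff : inner ℝ u ((regularizedGram X D s lam - regularizedGram X E s lam) u) =
      s * ∑ i, (d i - e i) * (X u i * X u i) := by
    simp only [sub_apply, inner_sub_right, inner_regularizedGram_apply hD,
      inner_regularizedGram_apply hE, sub_mul, Finset.sum_sub_distrib]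
    ring
  rw [hdiff, inner_regularizedGram_apply hE, abs_mul, abs_of_nonneg hs]
  have hu : 0 ≤ ε * (lam * inner ℝ u u) :=
    mul_nonneg hε (mul_nonneg hlam real_inner_self_nonneg)
  nlinarith [mul_le_mul_of_nonneg_left hsum hs]

end Real

theorem stmt_16_general {H : Type*} [NormedAddCommGroup H] [InnerProductSpace ℝ H]
    [CompleteSpace H] (n : ℕ)
    (X : H →L[ℝ] EuclideanSpace ℝ (Fin n))
    (dcoef dbar : Fin n → ℝ) (hdbarpos : ∀ i, 0 < dbar i)
    (hrel : ∀ i, |dcoef i - dbar i| / dbar i ≤ 1 / 2)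
    (Dop Dbarop : EuclideanSpace ℝ (Fin n) →L[ℝ] EuclideanSpace ℝ (Fin n))
    (hDop : ∀ (v : EuclideanSpace ℝ (Fin n)) (i : Fin n), Dop v i = dcoef i * v i)
    (hDbarop : ∀ (v : EuclideanSpace ℝ (Fin n)) (i : Fin n), Dbarop v i = dbar i * v i)
    (lam : ℝ) (hlam : 0 < lam)
    (Hop Hbarop : H →L[ℝ] H)
    (hHop : Hop = (n : ℝ)⁻¹ • (ContinuousLinearMap.adjoint X ∘L Dop ∘L X)
      + lam • (1 : H →L[ℝ] H))
    (hHbarop : Hbarop = (n : ℝ)⁻¹ • (ContinuousLinearMap.adjoint X ∘L Dbarop ∘L X)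
      + lam • (1 : H →L[ℝ] H))
    (R : H →L[ℝ] H)
    (hRsa : ∀ u v : H, (inner ℝ (R u) v : ℝ) = inner ℝ u (R v))
    (hRinv : ∀ u : H, R (R (Hbarop u)) = u ∧ Hbarop (R (R u)) = u) :
    (∀ u : H,
      -(1 / 2) * (inner ℝ u (Hbarop u) : ℝ) ≤ (inner ℝ u ((Hop - Hbarop) u) : ℝ) ∧
        (inner ℝ u ((Hop - Hbarop) u) : ℝ) ≤ (1 / 2) * (inner ℝ u (Hbarop u) : ℝ)) ∧
      ‖R ∘L Hop ∘L R - 1‖ ≤ 1 / 2 := by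
  have hweights (i : Fin n) : |dcoef i - dbar i| ≤ 1 / 2 * dbar i := by
    rw [← div_le_iff₀ (hdbarpos i)]
    exact hrel i
  have hloewner (u : H) :
      |inner ℝ u ((Hop - Hbarop) u)| ≤ 1 / 2 * inner ℝ u (Hbarop u) := by
    subst hHop hHbarop
    exact abs_inner_regularizedGram_sub_le hDop hDbarop (by positivity) hlam.le (by norm_num)
      hweights u
  have hRHR : ∀ u, R (Hbarop (R u)) = u :=
    Function.apply_apply_apply_eq_self_of_sq_inverse (fun u => (hRinv u).1)
      (fun u => (hRinv u).2)
  refine ⟨fun u => ?_, ?_⟩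
  · obtain ⟨hlower, hupper⟩ := abs_le.mp (hloewner u)
    constructor <;> linarith
  · have hsymm : (Hop : H →ₗ[ℝ] H).IsSymmetric := by
      subst hHop
      exact regularizedGram_isSymmetric hDop
    exact norm_conj_sub_one_le hsymm hRsa hRHR (by norm_num) hloewner

/-- Relative weight perturbation of the Hessian: if positive diagonal weights satisfy
`|d_i - d̄_i|/d̄_i ≤ 1/2` and `H_op = (1/n)XᵀDX + λI`, `H̄_op = (1/n)XᵀD̄X + λI`, then
`-(1/2)H̄_op ⪯ H_op - H̄_op ⪯ (1/2)H̄_op` and `Δ = H̄_op^{-1/2} H_op H̄_op^{-1/2} - I`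
satisfies `‖Δ‖ ≤ 1/2`. Here `R = H̄_op^{-1/2}` is given as a self-adjoint operator
with `R ∘ R = H̄_op⁻¹`. -/
theorem stmt_16 {H : Type*} [NormedAddCommGroup H] [InnerProductSpace ℝ H]
    [CompleteSpace H] (n : ℕ) (hn : 0 < n)
    (X : H →L[ℝ] EuclideanSpace ℝ (Fin n))
    (dcoef dbar : Fin n → ℝ) (hdpos : ∀ i, 0 < dcoef i) (hdbarpos : ∀ i, 0 < dbar i)
    (hrel : ∀ i, |dcoef i - dbar i| / dbar i ≤ 1 / 2)
    (Dop Dbarop : EuclideanSpace ℝ (Fin n) →L[ℝ] EuclideanSpace ℝ (Fin n))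
    (hDop : ∀ (v : EuclideanSpace ℝ (Fin n)) (i : Fin n), Dop v i = dcoef i * v i)
    (hDbarop : ∀ (v : EuclideanSpace ℝ (Fin n)) (i : Fin n), Dbarop v i = dbar i * v i)
    (lam : ℝ) (hlam : 0 < lam)
    (Hop Hbarop : H →L[ℝ] H)
    (hHop : Hop = (n : ℝ)⁻¹ • (ContinuousLinearMap.adjoint X ∘L Dop ∘L X)
      + lam • (1 : H →L[ℝ] H))
    (hHbarop : Hbarop = (n : ℝ)⁻¹ • (ContinuousLinearMap.adjoint X ∘L Dbarop ∘L X)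
      + lam • (1 : H →L[ℝ] H))
    (R : H →L[ℝ] H)
    (hRsa : ∀ u v : H, (inner ℝ (R u) v : ℝ) = inner ℝ u (R v))
    (hRinv : ∀ u : H, R (R (Hbarop u)) = u ∧ Hbarop (R (R u)) = u) :
    (∀ u : H,
      -(1 / 2) * (inner ℝ u (Hbarop u) : ℝ) ≤ (inner ℝ u ((Hop - Hbarop) u) : ℝ) ∧
        (inner ℝ u ((Hop - Hbarop) u) : ℝ) ≤ (1 / 2) * (inner ℝ u (Hbarop u) : ℝ)) ∧
      ‖R ∘L Hop ∘L R - 1‖ ≤ 1 / 2 :=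
  stmt_16_general n X dcoef dbar hdbarpos hrel Dop Dbarop hDop hDbarop lam hlam Hop Hbarop hHop
    hHbarop R hRsa hRinv
end

section
/- Eigenfunction-bounded trace comparison: let Σ and Σ̂ be positive self-adjoint trace-class operators on a Hilbert space, λ > 0, γ ∈ (0,1), and suppose (1-γ)(Σ + λI) ⪯ Σ̂ + λI. Suppose additionally Σ̂ = (1/n)∑_{i=1}^n φ_i ⊗ φ_i where each φ_i ∈ H satisfies ⟨φ_i, (Σ + λI)^{-1} φ_i⟩ ≤ M₁² Tr((Σ + λI)^{-1}Σ). Then Tr((Σ̂ + λI)^{-1} Σ̂) ≤ M₁² (1-γ)^{-1} Tr((Σ + λI)^{-1} Σ). -/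
/-!
Since `Σ̂ + λI ⪰ (1 - γ)(Σ + λI)`, the inverses compare the other way round on every vector:
`⟨φ, (Σ̂ + λI)⁻¹φ⟩ ≤ (1 - γ)⁻¹ ⟨φ, (Σ + λI)⁻¹φ⟩`. This follows from the variational formula
`⟨x, A⁻¹x⟩ = sup_y (2⟨x, y⟩ - ⟨y, Ay⟩)`, evaluated at `y = (1 - γ)(Σ̂ + λI)⁻¹x`. The trace
`Tr((Σ̂ + λI)⁻¹Σ̂)` is the average of `⟨φᵢ, (Σ̂ + λI)⁻¹φᵢ⟩`, each of which is thereby bounded by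
`M₁² (1 - γ)⁻¹ Tr((Σ + λI)⁻¹Σ)`.
-/

open Matrix

namespace Matrix

variable {ι : Type*} [Fintype ι]

theorem trace_mul_vecMulVec_self {R : Type*} [CommSemiring R] (M : Matrix ι ι R) (v : ι → R) :
    (M * vecMulVec v v).trace = v ⬝ᵥ (M *ᵥ v) := by
  rw [mul_vecMulVec, trace_vecMulVec, dotProduct_comm]

theorem trace_mul_smul_sum_vecMulVec_le {n : ℕ} (hn : 0 < n) (M : Matrix ι ι ℝ)
    (φ : Fin n → ι → ℝ) {C : ℝ} (hC : ∀ i, φ i ⬝ᵥ (M *ᵥ φ i) ≤ C) :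
    (M * ((n : ℝ)⁻¹ • ∑ i, vecMulVec (φ i) (φ i))).trace ≤ C := by
  have hsum : ∑ i, φ i ⬝ᵥ (M *ᵥ φ i) ≤ n * C := by
    simpa using Finset.sum_le_sum fun i (_ : i ∈ Finset.univ) => hC i
  rw [Matrix.mul_smul, trace_smul, Finset.mul_sum, trace_sum, smul_eq_mul,
    inv_mul_le_iff₀ (by exact_mod_cast hn)]
  simpa only [trace_mul_vecMulVec_self] using hsum

variable [DecidableEq ι]

theorem PosDef.two_mul_dotProduct_sub_le_dotProduct_inv_mulVec {A : Matrix ι ι ℝ}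
    (hA : A.PosDef) (x y : ι → ℝ) :
    2 * (x ⬝ᵥ y) - y ⬝ᵥ (A *ᵥ y) ≤ x ⬝ᵥ (A⁻¹ *ᵥ x) := by
  set z := A⁻¹ *ᵥ x
  have hAz : A *ᵥ z = x := by
    rw [mulVec_mulVec, mul_nonsing_inv _ ((isUnit_iff_isUnit_det _).mp hA.isUnit), one_mulVec]
  have hsymm : y ⬝ᵥ (A *ᵥ z) = z ⬝ᵥ (A *ᵥ y) := by
    have hT : Aᵀ = A := by simpa using hA.isHermitian.eq
    rw [dotProduct_mulVec, ← mulVec_transpose, hT, dotProduct_comm]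
  have hdiff := hA.posSemidef.dotProduct_mulVec_nonneg (y - z)
  simp only [star_trivial, mulVec_sub, sub_dotProduct, dotProduct_sub] at hdiff
  rw [hAz] at hsymm hdiff
  rw [dotProduct_comm x y, dotProduct_comm x z]
  linarith

theorem PosDef.dotProduct_inv_mulVec_le_of_smul_le {A B : Matrix ι ι ℝ} (hA : A.PosDef)
    {c : ℝ} (hc : 0 < c) (hAB : (B - c • A).PosSemidef) (x : ι → ℝ) :
    x ⬝ᵥ (B⁻¹ *ᵥ x) ≤ c⁻¹ * (x ⬝ᵥ (A⁻¹ *ᵥ x)) := by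
  have hB : B.PosDef := by simpa using PosDef.posSemidef_add hAB (hA.smul hc)
  set y := B⁻¹ *ᵥ x
  have hBy : B *ᵥ y = x := by
    rw [mulVec_mulVec, mul_nonsing_inv _ ((isUnit_iff_isUnit_det _).mp hB.isUnit), one_mulVec]
  have hcA : c * (y ⬝ᵥ (A *ᵥ y)) ≤ x ⬝ᵥ y := by
    have hquad := hAB.dotProduct_mulVec_nonneg y
    simp only [star_trivial, sub_mulVec, smul_mulVec, dotProduct_sub, dotProduct_smul,
      smul_eq_mul, hBy, dotProduct_comm y x] at hquad
    linarith
  have hvar := hA.two_mul_dotProduct_sub_le_dotProduct_inv_mulVec x (c • y)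
  simp only [dotProduct_smul, mulVec_smul, smul_dotProduct, smul_eq_mul] at hvar
  rw [le_inv_mul_iff₀ hc]
  nlinarith

end Matrix

theorem stmt_17_general (d n : ℕ) (hn : 0 < n) (Sig : Matrix (Fin d) (Fin d) ℝ)
    (hSig : Sig.PosSemidef) (φ : Fin n → (Fin d → ℝ)) (Sighat : Matrix (Fin d) (Fin d) ℝ)
    (hSighat : Sighat = (n : ℝ)⁻¹ • ∑ i, Matrix.vecMulVec (φ i) (φ i))
    (lam γ M1 : ℝ) (hlam : 0 < lam) (hγ1 : γ < 1)
    (hloewner : ((Sighat + lam • (1 : Matrix (Fin d) (Fin d) ℝ))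
        - (1 - γ) • (Sig + lam • (1 : Matrix (Fin d) (Fin d) ℝ))).PosSemidef)
    (hquad : ∀ i, dotProduct (φ i)
        (Matrix.mulVec (Sig + lam • (1 : Matrix (Fin d) (Fin d) ℝ))⁻¹ (φ i))
      ≤ M1 ^ 2 * ((Sig + lam • (1 : Matrix (Fin d) (Fin d) ℝ))⁻¹ * Sig).trace) :
    ((Sighat + lam • (1 : Matrix (Fin d) (Fin d) ℝ))⁻¹ * Sighat).trace ≤
      M1 ^ 2 * (1 - γ)⁻¹ * ((Sig + lam • (1 : Matrix (Fin d) (Fin d) ℝ))⁻¹ * Sig).trace := by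
  have hA : (Sig + lam • (1 : Matrix (Fin d) (Fin d) ℝ)).PosDef :=
    PosDef.posSemidef_add hSig (PosDef.one.smul hlam)
  have hc : 0 < 1 - γ := by linarith
  have hbound : ∀ i, φ i ⬝ᵥ ((Sighat + lam • 1)⁻¹ *ᵥ φ i) ≤
      M1 ^ 2 * (1 - γ)⁻¹ * ((Sig + lam • 1)⁻¹ * Sig).trace := fun i =>
    calc φ i ⬝ᵥ ((Sighat + lam • 1)⁻¹ *ᵥ φ i)
        ≤ (1 - γ)⁻¹ * (φ i ⬝ᵥ ((Sig + lam • 1)⁻¹ *ᵥ φ i)) :=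
          hA.dotProduct_inv_mulVec_le_of_smul_le hc hloewner (φ i)
      _ ≤ (1 - γ)⁻¹ * (M1 ^ 2 * ((Sig + lam • 1)⁻¹ * Sig).trace) := by gcongr; exact hquad i
      _ = M1 ^ 2 * (1 - γ)⁻¹ * ((Sig + lam • 1)⁻¹ * Sig).trace := by ring
  have hmean := trace_mul_smul_sum_vecMulVec_le hn (Sighat + lam • 1)⁻¹ φ hbound
  rwa [← hSighat] at hmean

/-- Eigenfunction-bounded trace comparison: if `(1-γ)(Σ + λI) ⪯ Σ̂ + λI` and
`Σ̂ = (1/n)∑ φ_i φ_iᵀ` with `⟨φ_i, (Σ+λI)⁻¹φ_i⟩ ≤ M₁² Tr((Σ+λI)⁻¹Σ)` for each `i`,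
then `Tr((Σ̂+λI)⁻¹Σ̂) ≤ M₁²(1-γ)⁻¹ Tr((Σ+λI)⁻¹Σ)`. -/
theorem stmt_17 (d n : ℕ) (hn : 0 < n) (Sig : Matrix (Fin d) (Fin d) ℝ)
    (hSig : Sig.PosSemidef) (φ : Fin n → (Fin d → ℝ)) (Sighat : Matrix (Fin d) (Fin d) ℝ)
    (hSighat : Sighat = (n : ℝ)⁻¹ • ∑ i, Matrix.vecMulVec (φ i) (φ i))
    (lam γ M1 : ℝ) (hlam : 0 < lam) (hγ0 : 0 < γ) (hγ1 : γ < 1)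
    (hloewner : ((Sighat + lam • (1 : Matrix (Fin d) (Fin d) ℝ))
        - (1 - γ) • (Sig + lam • (1 : Matrix (Fin d) (Fin d) ℝ))).PosSemidef)
    (hquad : ∀ i, dotProduct (φ i)
        (Matrix.mulVec (Sig + lam • (1 : Matrix (Fin d) (Fin d) ℝ))⁻¹ (φ i))
      ≤ M1 ^ 2 * ((Sig + lam • (1 : Matrix (Fin d) (Fin d) ℝ))⁻¹ * Sig).trace) :
    ((Sighat + lam • (1 : Matrix (Fin d) (Fin d) ℝ))⁻¹ * Sighat).trace ≤
      M1 ^ 2 * (1 - γ)⁻¹ * ((Sig + lam • (1 : Matrix (Fin d) (Fin d) ℝ))⁻¹ * Sig).trace :=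
  stmt_17_general d n hn Sig hSig φ Sighat hSighat lam γ M1 hlam hγ1 hloewner hquad
end
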